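/- arXiv:1411.0510 — 5 statements merged into one kernel-verified Lean document; each statement's English description precedes it below -/
import Mathlib

section
/- In a right-angled Coxeter group, two reduced words represent the same group element if and only if one can be obtained from the other by a sequence of swaps of adjacent commuting generators. -/
/-!
Swapping commuting generators does not change the group element. Conversely, the group acts
on reduced words up to swaps: a generator `γ` deletes `γ` from the front of `w` when some
rearrangement of `w` starts with `γ`, and prepends `γ` otherwise. This is well defined because a
letter at the front of a word can be tracked through swaps: it only ever passes letters commuting
with it. Commuting generators give commuting maps, since a word admitting both deletions can be
rearranged to start with either letter. The element represented by a reduced word `w` sends the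
empty word to the class of `w`, so reduced words representing the same element are
rearrangements of each other.
-/

variable {Γ : Type*}

/-- Two generators commute: they are distinct and non-adjacent in the Coxeter graph. -/
def RACommutes (adj : Γ → Γ → Prop) (γ δ : Γ) : Prop := γ ≠ δ ∧ ¬ adj γ δ

/-- Relations of the right-angled Coxeter group: squares of generators and
commutators of commuting (non-adjacent) pairs. -/
def coxRels (adj : Γ → Γ → Prop) : Set (FreeGroup Γ) :=
  {r | (∃ γ : Γ, r = FreeGroup.of γ * FreeGroup.of γ) ∨
    (∃ γ δ : Γ, RACommutes adj γ δ ∧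
      r = FreeGroup.of γ * FreeGroup.of δ * (FreeGroup.of γ)⁻¹ * (FreeGroup.of δ)⁻¹)}

/-- The element of the right-angled Coxeter group represented by a word. -/
def evalWord (adj : Γ → Γ → Prop) (w : List Γ) : PresentedGroup (coxRels adj) :=
  (w.map (fun γ => (PresentedGroup.of γ : PresentedGroup (coxRels adj)))).prod

/-- One swap of two adjacent commuting generators. -/
def SwapStep (adj : Γ → Γ → Prop) (w w' : List Γ) : Prop :=
  ∃ (u v : List Γ) (γ δ : Γ), RACommutes adj γ δ ∧
    w = u ++ γ :: δ :: v ∧ w' = u ++ δ :: γ :: v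

/-- Permutation of words: a sequence of swaps of adjacent commuting generators. -/
def WordPerm (adj : Γ → Γ → Prop) : List Γ → List Γ → Prop :=
  Relation.ReflTransGen (SwapStep adj)

/-- A word is reduced iff there is no pair of equal letters such that the letter
commutes with every letter strictly in between. -/
def GIsReduced (adj : Γ → Γ → Prop) (w : List Γ) : Prop :=
  ¬ ∃ (u v x : List Γ) (γ : Γ), w = u ++ γ :: (v ++ γ :: x) ∧
      ∀ δ ∈ v, RACommutes adj γ δ

open Relation

section

variable {adj : Γ → Γ → Prop}

theorem RACommutes.symm (hsym : Symmetric adj) {γ δ : Γ} (h : RACommutes adj γ δ) :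
    RACommutes adj δ γ :=
  ⟨h.1.symm, fun h' => h.2 (hsym h')⟩

theorem SwapStep.symm (hsym : Symmetric adj) {w w' : List Γ} (h : SwapStep adj w w') :
    SwapStep adj w' w := by
  obtain ⟨u, v, γ, δ, hc, rfl, rfl⟩ := h
  exact ⟨u, v, δ, γ, hc.symm hsym, rfl, rfl⟩

theorem WordPerm.trans {w w' w'' : List Γ} (h : WordPerm adj w w') (h' : WordPerm adj w' w'') :
    WordPerm adj w w'' :=
  ReflTransGen.trans h h'

theorem WordPerm.symm (hsym : Symmetric adj) {w w' : List Γ} (h : WordPerm adj w w') :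
    WordPerm adj w' w := by
  induction h with
  | refl => exact .refl
  | tail _ hstep ih => exact ReflTransGen.head (hstep.symm hsym) ih

theorem WordPerm.append_left (t : List Γ) {w w' : List Γ} (h : WordPerm adj w w') :
    WordPerm adj (t ++ w) (t ++ w') :=
  ReflTransGen.lift (t ++ ·)
    (fun _ _ ⟨u, v, γ, δ, hc, h₁, h₂⟩ => ⟨t ++ u, v, γ, δ, hc, by simp [h₁], by simp [h₂]⟩) _ _ h

theorem WordPerm.cons (γ : Γ) {w w' : List Γ} (h : WordPerm adj w w') :
    WordPerm adj (γ :: w) (γ :: w') :=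
  h.append_left [γ]

theorem wordPerm_swap {γ δ : Γ} (hc : RACommutes adj γ δ) (w : List Γ) :
    WordPerm adj (γ :: δ :: w) (δ :: γ :: w) :=
  .single ⟨[], w, γ, δ, hc, rfl, rfl⟩

theorem wordPerm_append_cons_of_commute (hsym : Symmetric adj) {γ : Γ} {v : List Γ}
    (hv : ∀ δ ∈ v, RACommutes adj γ δ) (x : List Γ) :
    WordPerm adj (v ++ γ :: x) (γ :: (v ++ x)) := by
  induction v with
  | nil => exact .refl
  | cons δ v ih =>
    have hδ := (hv δ List.mem_cons_self).symm hsym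
    exact ((ih fun ε hε => hv ε (List.mem_cons_of_mem _ hε)).cons δ).trans (wordPerm_swap hδ _)

/-- A marked letter `γ`, preceded by letters commuting with it, keeps this property across one
swap, and deleting it commutes with the swap up to rearrangement. -/
theorem exists_split_of_swap {α β γ : Γ} {q v : List Γ} (hc : RACommutes adj α β) :
    ∀ {p u : List Γ}, u ++ γ :: v = p ++ α :: β :: q → (∀ δ ∈ u, RACommutes adj γ δ) →
      ∃ u₂ v₂, p ++ β :: α :: q = u₂ ++ γ :: v₂ ∧ (∀ δ ∈ u₂, RACommutes adj γ δ) ∧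
        WordPerm adj (u ++ v) (u₂ ++ v₂)
  | [], [], h, _ => by
    obtain ⟨rfl, rfl⟩ : γ = α ∧ v = β :: q := by simpa using h
    exact ⟨[β], q, rfl, by simpa using hc, .refl⟩
  | [], [x], h, _ => by
    obtain ⟨rfl, rfl, rfl⟩ : x = α ∧ γ = β ∧ v = q := by simpa using h
    exact ⟨[], x :: v, rfl, by simp, .refl⟩
  | [], x :: y :: u, h, hu => by
    obtain ⟨rfl, rfl, rfl⟩ : x = α ∧ y = β ∧ u ++ γ :: v = q := by simpa using h
    refine ⟨y :: x :: u, v, rfl, fun δ hδ => hu δ ?_, wordPerm_swap hc _⟩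
    simp only [List.mem_cons] at hδ ⊢
    tauto
  | x :: p, [], h, _ => by
    obtain ⟨rfl, rfl⟩ : γ = x ∧ v = p ++ α :: β :: q := by simpa using h
    exact ⟨[], p ++ β :: α :: q, rfl, by simp, (wordPerm_swap hc q).append_left p⟩
  | x :: p, y :: u, h, hu => by
    obtain ⟨rfl, h'⟩ : y = x ∧ u ++ γ :: v = p ++ α :: β :: q := by simpa using h
    obtain ⟨u₂, v₂, h₂, hu₂, hperm⟩ :=
      exists_split_of_swap hc h' fun δ hδ => hu δ (List.mem_cons_of_mem _ hδ)
    exact ⟨y :: u₂, v₂, by simp [h₂], by simpa using ⟨hu y List.mem_cons_self, hu₂⟩,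
      hperm.cons y⟩

theorem WordPerm.exists_of_cons {γ : Γ} {a z : List Γ} (h : WordPerm adj (γ :: a) z) :
    ∃ u v, z = u ++ γ :: v ∧ (∀ δ ∈ u, RACommutes adj γ δ) ∧ WordPerm adj a (u ++ v) := by
  induction h with
  | refl => exact ⟨[], a, rfl, by simp, .refl⟩
  | tail _ hstep ih =>
    obtain ⟨u, v, rfl, hu, ha⟩ := ih
    obtain ⟨p, q, α, β, hc, h, rfl⟩ := hstep
    obtain ⟨u₂, v₂, h₂, hu₂, hperm⟩ := exists_split_of_swap hc h hu
    exact ⟨u₂, v₂, h₂, hu₂, ha.trans hperm⟩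

theorem WordPerm.of_cons {γ : Γ} {a b : List Γ} (h : WordPerm adj (γ :: a) (γ :: b)) :
    WordPerm adj a b := by
  obtain ⟨u, v, huv, hu, ha⟩ := h.exists_of_cons
  cases u with
  | nil =>
    obtain rfl : b = v := by simpa using huv
    exact ha
  | cons x u =>
    obtain rfl : γ = x := by simpa using (List.cons.inj huv).1
    exact absurd rfl (hu γ List.mem_cons_self).1

theorem WordPerm.exists_of_cons_of_ne (hsym : Symmetric adj) {α β : Γ} {a b : List Γ}
    (hne : α ≠ β) (h : WordPerm adj (α :: a) (β :: b)) :
    ∃ t, WordPerm adj a (β :: t) ∧ WordPerm adj b (α :: t) := by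
  obtain ⟨u, v, huv, hu, ha⟩ := h.exists_of_cons
  cases u with
  | nil => exact absurd (List.cons.inj huv).1 hne.symm
  | cons x u =>
    obtain ⟨rfl, rfl⟩ : β = x ∧ b = u ++ α :: v := by simpa using huv
    exact ⟨u ++ v, ha,
      wordPerm_append_cons_of_commute hsym (fun δ hδ => hu δ (List.mem_cons_of_mem _ hδ)) v⟩

def CanStartWith (adj : Γ → Γ → Prop) (γ : Γ) (w : List Γ) : Prop :=
  ∃ w', WordPerm adj w (γ :: w')

theorem CanStartWith.of_wordPerm {γ : Γ} {w w' : List Γ} (h : WordPerm adj w w')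
    (hw' : CanStartWith adj γ w') : CanStartWith adj γ w :=
  let ⟨t, ht⟩ := hw'
  ⟨t, h.trans ht⟩

theorem CanStartWith.of_cons (hsym : Symmetric adj) {γ α : Γ} {w : List Γ} (hne : γ ≠ α)
    (h : CanStartWith adj γ (α :: w)) : CanStartWith adj γ w :=
  let ⟨_, hw'⟩ := h
  let ⟨t, ht, _⟩ := hw'.exists_of_cons_of_ne hsym hne.symm
  ⟨t, ht⟩

theorem CanStartWith.cons (hsym : Symmetric adj) {γ α : Γ} {w : List Γ}
    (hc : RACommutes adj γ α) (h : CanStartWith adj γ w) : CanStartWith adj γ (α :: w) :=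
  let ⟨t, ht⟩ := h
  ⟨α :: t, (ht.cons α).trans (wordPerm_swap (hc.symm hsym) t)⟩

theorem gIsReduced_nil : GIsReduced adj [] := by
  rintro ⟨u, v, x, γ, h, -⟩
  simp at h

theorem GIsReduced.tail {γ : Γ} {w : List Γ} (h : GIsReduced adj (γ :: w)) :
    GIsReduced adj w :=
  fun ⟨u, v, x, δ, hw, hv⟩ => h ⟨γ :: u, v, x, δ, by simp [hw], hv⟩

theorem gIsReduced_cons_iff (hsym : Symmetric adj) {γ : Γ} {w : List Γ} :
    GIsReduced adj (γ :: w) ↔ ¬CanStartWith adj γ w ∧ GIsReduced adj w := by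
  refine ⟨fun h => ⟨fun ⟨w', hw'⟩ => ?_, h.tail⟩, fun ⟨hγ, hw⟩ => ?_⟩
  · obtain ⟨u, v, rfl, hu, -⟩ := (hw'.symm hsym).exists_of_cons
    exact h ⟨[], u, v, γ, rfl, hu⟩
  · rintro ⟨_ | ⟨y, u⟩, v, x, δ, h, hv⟩
    · obtain ⟨rfl, rfl⟩ : γ = δ ∧ w = v ++ δ :: x := by simpa using h
      exact hγ ⟨v ++ x, wordPerm_append_cons_of_commute hsym hv x⟩
    · obtain ⟨rfl, rfl⟩ : γ = y ∧ w = u ++ δ :: (v ++ δ :: x) := by simpa using h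
      exact hw ⟨u, v, x, δ, rfl, hv⟩

theorem not_gIsReduced_cons_cons (γ : Γ) (w : List Γ) : ¬GIsReduced adj (γ :: γ :: w) :=
  fun h => h ⟨[], [], w, γ, rfl, by simp⟩

theorem GIsReduced.swap (hsym : Symmetric adj) {α β : Γ} {v : List Γ}
    (hc : RACommutes adj α β) :
    ∀ {u : List Γ}, GIsReduced adj (u ++ α :: β :: v) → GIsReduced adj (u ++ β :: α :: v)
  | [], h => by
    simp only [List.nil_append, gIsReduced_cons_iff hsym] at h ⊢
    obtain ⟨hα, hβ, hv⟩ := h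
    exact ⟨fun h' => hβ (h'.of_cons hsym hc.1.symm), fun h' => hα (h'.cons hsym hc), hv⟩
  | x :: u, h => by
    rw [List.cons_append, gIsReduced_cons_iff hsym] at h ⊢
    exact ⟨fun h' => h.1 (h'.of_wordPerm ((wordPerm_swap hc v).append_left u)),
      GIsReduced.swap hsym hc h.2⟩

theorem GIsReduced.of_wordPerm (hsym : Symmetric adj) {w w' : List Γ} (h : WordPerm adj w w')
    (hw : GIsReduced adj w) : GIsReduced adj w' := by
  induction h with
  | refl => exact hw
  | tail _ hstep ih =>
    obtain ⟨u, v, α, β, hc, rfl, rfl⟩ := hstep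
    exact ih.swap hsym hc

/-- `w` and `w'` are joined by an edge labelled `γ` in the Cayley graph, read on words up to
rearrangement. -/
def CayleyEdge (adj : Γ → Γ → Prop) (γ : Γ) (w w' : List Γ) : Prop :=
  WordPerm adj w (γ :: w') ∨ WordPerm adj w' (γ :: w)

theorem CayleyEdge.symm {γ : Γ} {w w' : List Γ} (h : CayleyEdge adj γ w w') :
    CayleyEdge adj γ w' w :=
  Or.symm h

theorem CayleyEdge.congr (hsym : Symmetric adj) {γ : Γ} {w w' v v' : List Γ}
    (hw : WordPerm adj w v) (hw' : WordPerm adj w' v') :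
    CayleyEdge adj γ w w' → CayleyEdge adj γ v v'
  | .inl h => .inl ((hw.symm hsym).trans (h.trans (hw'.cons γ)))
  | .inr h => .inr ((hw'.symm hsym).trans (h.trans (hw.cons γ)))

theorem exists_cayleyEdge (hsym : Symmetric adj) (γ : Γ) {w : List Γ} (hw : GIsReduced adj w) :
    ∃ w', GIsReduced adj w' ∧ CayleyEdge adj γ w w' := by
  by_cases h : CanStartWith adj γ w
  · obtain ⟨w', hw'⟩ := h
    exact ⟨w', (hw.of_wordPerm hsym hw').tail, .inl hw'⟩
  · exact ⟨γ :: w, (gIsReduced_cons_iff hsym).2 ⟨h, hw⟩, .inr .refl⟩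

theorem CayleyEdge.wordPerm (hsym : Symmetric adj) {γ : Γ} {w x y : List Γ}
    (hx : GIsReduced adj x) (hy : GIsReduced adj y)
    (hwx : CayleyEdge adj γ w x) (hwy : CayleyEdge adj γ w y) : WordPerm adj x y := by
  rcases hwx with hwx | hxw <;> rcases hwy with hwy | hyw
  · exact ((hwx.symm hsym).trans hwy).of_cons
  · exact absurd (hy.of_wordPerm hsym (hyw.trans (hwx.cons γ))) (not_gIsReduced_cons_cons γ x)
  · exact absurd (hx.of_wordPerm hsym (hxw.trans (hwy.cons γ))) (not_gIsReduced_cons_cons γ y)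
  · exact hxw.trans (hyw.symm hsym)

theorem CayleyEdge.exists_comm (hsym : Symmetric adj) {γ δ : Γ} (hc : RACommutes adj γ δ)
    {a b c : List Γ} (ha : GIsReduced adj a) (hc' : GIsReduced adj c)
    (hab : CayleyEdge adj δ a b) (hbc : CayleyEdge adj γ b c) :
    ∃ x, GIsReduced adj x ∧ CayleyEdge adj γ a x ∧ CayleyEdge adj δ x c := by
  rcases hab with hab | hba <;> rcases hbc with hbc | hcb
  · have hac : WordPerm adj a (γ :: δ :: c) :=
      hab.trans ((hbc.cons δ).trans (wordPerm_swap (hc.symm hsym) c))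
    exact ⟨δ :: c, (ha.of_wordPerm hsym hac).tail, .inl hac, .inl .refl⟩
  · have hγa : ¬CanStartWith adj γ a := fun h =>
      let ⟨t, hbt⟩ := (h.of_wordPerm (hab.symm hsym)).of_cons hsym hc.1
      not_gIsReduced_cons_cons γ t (hc'.of_wordPerm hsym (hcb.trans (hbt.cons γ)))
    exact ⟨γ :: a, (gIsReduced_cons_iff hsym).2 ⟨hγa, ha⟩, .inr .refl,
      .inl ((hab.cons γ).trans ((wordPerm_swap hc b).trans ((hcb.symm hsym).cons δ)))⟩
  · obtain ⟨t, hat, hct⟩ := ((hba.symm hsym).trans hbc).exists_of_cons_of_ne hsym hc.1.symm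
    exact ⟨t, (ha.of_wordPerm hsym hat).tail, .inl hat, .inr hct⟩
  · have hca : WordPerm adj c (δ :: γ :: a) :=
      hcb.trans ((hba.cons γ).trans (wordPerm_swap hc a))
    exact ⟨γ :: a, (hc'.of_wordPerm hsym hca).tail, .inr .refl, .inr hca⟩

def reducedSetoid (hsym : Symmetric adj) : Setoid {w : List Γ // GIsReduced adj w} where
  r a b := WordPerm adj a.1 b.1
  iseqv := ⟨fun _ => .refl, fun h => h.symm hsym, fun h h' => h.trans h'⟩

abbrev ReducedClass (hsym : Symmetric adj) := Quotient (reducedSetoid hsym)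

noncomputable def cayleyNeighbor (hsym : Symmetric adj) (γ : Γ)
    (w : {w : List Γ // GIsReduced adj w}) : {w : List Γ // GIsReduced adj w} :=
  ⟨(exists_cayleyEdge hsym γ w.2).choose, (exists_cayleyEdge hsym γ w.2).choose_spec.1⟩

theorem cayleyEdge_cayleyNeighbor (hsym : Symmetric adj) (γ : Γ)
    (w : {w : List Γ // GIsReduced adj w}) : CayleyEdge adj γ w.1 (cayleyNeighbor hsym γ w).1 :=
  (exists_cayleyEdge hsym γ w.2).choose_spec.2

theorem wordPerm_cayleyNeighbor (hsym : Symmetric adj) {γ : Γ}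
    {w : {w : List Γ // GIsReduced adj w}} {x : List Γ} (hx : GIsReduced adj x)
    (h : CayleyEdge adj γ w.1 x) : WordPerm adj (cayleyNeighbor hsym γ w).1 x :=
  (cayleyEdge_cayleyNeighbor hsym γ w).wordPerm hsym (cayleyNeighbor hsym γ w).2 hx h

noncomputable def leftMul (hsym : Symmetric adj) (γ : Γ) :
    ReducedClass hsym → ReducedClass hsym :=
  Quotient.map (cayleyNeighbor hsym γ) fun _ b hab =>
    (wordPerm_cayleyNeighbor hsym (cayleyNeighbor hsym γ b).2
      ((cayleyEdge_cayleyNeighbor hsym γ b).congr hsym (hab.symm hsym) .refl))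

theorem leftMul_involutive (hsym : Symmetric adj) (γ : Γ) :
    Function.Involutive (leftMul hsym γ) :=
  Quotient.ind fun a => Quotient.sound
    (wordPerm_cayleyNeighbor hsym a.2 (cayleyEdge_cayleyNeighbor hsym γ a).symm)

theorem leftMul_comm (hsym : Symmetric adj) {γ δ : Γ} (hc : RACommutes adj γ δ)
    (q : ReducedClass hsym) :
    leftMul hsym γ (leftMul hsym δ q) = leftMul hsym δ (leftMul hsym γ q) := by
  induction q using Quotient.ind with | _ a =>
  set c := cayleyNeighbor hsym γ (cayleyNeighbor hsym δ a)
  obtain ⟨x, hx, hax, hxc⟩ := CayleyEdge.exists_comm hsym hc a.2 c.2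
    (cayleyEdge_cayleyNeighbor hsym δ a) (cayleyEdge_cayleyNeighbor hsym γ _)
  have hγa := wordPerm_cayleyNeighbor hsym hx hax
  exact Quotient.sound
    ((wordPerm_cayleyNeighbor hsym c.2 (hxc.congr hsym (hγa.symm hsym) .refl)).symm hsym)

noncomputable def leftMulPerm (hsym : Symmetric adj) (γ : Γ) : Equiv.Perm (ReducedClass hsym) :=
  (leftMul_involutive hsym γ).toPerm

noncomputable def cayleyAction (hsym : Symmetric adj) :
    PresentedGroup (coxRels adj) →* Equiv.Perm (ReducedClass hsym) :=
  PresentedGroup.toGroup (f := leftMulPerm hsym) <| by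
    rintro r (⟨γ, rfl⟩ | ⟨γ, δ, hc, rfl⟩)
    · exact Equiv.ext (leftMul_involutive hsym γ)
    · rw [map_mul, map_mul, map_mul, map_inv, map_inv, FreeGroup.lift_apply_of,
        FreeGroup.lift_apply_of, ← commutatorElement_def, commutatorElement_eq_one_iff_commute]
      exact Equiv.ext (leftMul_comm hsym hc)

theorem evalWord_cons (γ : Γ) (w : List Γ) :
    evalWord adj (γ :: w) = PresentedGroup.of γ * evalWord adj w := by
  simp [evalWord]

theorem evalWord_append (u v : List Γ) :
    evalWord adj (u ++ v) = evalWord adj u * evalWord adj v := by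
  simp [evalWord]

theorem cayleyAction_evalWord (hsym : Symmetric adj) {w : List Γ} (hw : GIsReduced adj w) :
    cayleyAction hsym (evalWord adj w) ⟦⟨[], gIsReduced_nil⟩⟧ = ⟦⟨w, hw⟩⟧ := by
  induction w with
  | nil => rfl
  | cons γ w ih =>
    rw [evalWord_cons, map_mul, Equiv.Perm.mul_apply, ih hw.tail, cayleyAction,
      PresentedGroup.toGroup.of]
    exact Quotient.sound (wordPerm_cayleyNeighbor hsym hw (.inr .refl))

theorem of_mul_of_of_raCommutes {γ δ : Γ} (hc : RACommutes adj γ δ) :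
    (PresentedGroup.of γ : PresentedGroup (coxRels adj)) * PresentedGroup.of δ =
      PresentedGroup.of δ * PresentedGroup.of γ := by
  rw [← commutatorElement_eq_one_iff_mul_comm, commutatorElement_def]
  have h := PresentedGroup.one_of_mem (rels := coxRels adj) (Or.inr ⟨γ, δ, hc, rfl⟩)
  rwa [map_mul, map_mul, map_mul, map_inv, map_inv] at h

theorem evalWord_eq_of_wordPerm {w w' : List Γ} (h : WordPerm adj w w') :
    evalWord adj w = evalWord adj w' := by
  induction h with
  | refl => rfl
  | tail _ hstep ih =>
    obtain ⟨u, v, γ, δ, hc, rfl, rfl⟩ := hstep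
    simp only [ih, evalWord_append, evalWord_cons, ← mul_assoc, of_mul_of_of_raCommutes hc]

end

theorem reduced_words_equal_iff_perm_general
    (adj : Γ → Γ → Prop) (hsym : Symmetric adj)
    (u v : List Γ) (hu : GIsReduced adj u) (hv : GIsReduced adj v) :
    evalWord adj u = evalWord adj v ↔ WordPerm adj u v := by
  refine ⟨fun h => ?_, evalWord_eq_of_wordPerm⟩
  have hclass := cayleyAction_evalWord hsym hu
  rw [h, cayleyAction_evalWord hsym hv] at hclass
  exact Quotient.exact hclass.symm

/-- In a right-angled Coxeter group, two reduced words represent the same group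
element iff one is a permutation of the other by swaps of adjacent commuting
generators. -/
theorem reduced_words_equal_iff_perm [Fintype Γ]
    (adj : Γ → Γ → Prop) (hsym : Symmetric adj) (hirr : Irreflexive adj)
    (u v : List Γ) (hu : GIsReduced adj u) (hv : GIsReduced adj v) :
    evalWord adj u = evalWord adj v ↔ WordPerm adj u v :=
  reduced_words_equal_iff_perm_general adj hsym u v hu hv
end

section
/- In a right-angled Coxeter group with generating set Γ, for any two subsets s and t of Γ, the subgroup generated by s ∩ t equals the intersection of the subgroup generated by s with the subgroup generated by t. -/
variable {Γ : Type*}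

/-! A retraction of a group onto the subgroup generated by `f '' t` that kills the remaining
generators maps `⟨f '' s⟩` into `⟨f '' (s ∩ t)⟩` and fixes `⟨f '' t⟩`, so it pins every element
of `⟨f '' s⟩ ⊓ ⟨f '' t⟩` inside `⟨f '' (s ∩ t)⟩`. In a right-angled Coxeter group such a
retraction exists for every `t`, since sending generators outside `t` to `1` respects the
relations. -/

theorem Subgroup.closure_image_inf_le_of_retraction {G ι : Type*} [Group G] (f : ι → G)
    (s t : Set ι) (ρ : G →* G) (hρ_mem : ∀ i ∈ t, ρ (f i) = f i)
    (hρ_notMem : ∀ i ∉ t, ρ (f i) = 1) :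
    Subgroup.closure (f '' s) ⊓ Subgroup.closure (f '' t) ≤ Subgroup.closure (f '' (s ∩ t)) := by
  rintro x ⟨hxs, hxt⟩
  have hρ_fix : ρ x = x := by
    refine MonoidHom.eqOn_closure (g := MonoidHom.id G) ?_ hxt
    rintro _ ⟨i, hi, rfl⟩
    exact hρ_mem i hi
  have hρ_maps : (Subgroup.closure (f '' s)).map ρ ≤ Subgroup.closure (f '' (s ∩ t)) := by
    rw [MonoidHom.map_closure, Subgroup.closure_le]
    rintro _ ⟨_, ⟨i, hi, rfl⟩, rfl⟩
    by_cases hit : i ∈ t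
    · rw [hρ_mem i hit]
      exact Subgroup.subset_closure ⟨i, ⟨hi, hit⟩, rfl⟩
    · rw [hρ_notMem i hit]
      exact one_mem _
  rw [← hρ_fix]
  exact hρ_maps ⟨x, hxs, rfl⟩

namespace RACoxeter

variable {adj : Γ → Γ → Prop}

theorem lift_eq_one_of_mem_coxRels {G : Type*} [Group G] {f : Γ → G}
    (hsq : ∀ γ, f γ * f γ = 1) (hcomm : ∀ γ δ, RACommutes adj γ δ → Commute (f γ) (f δ)) :
    ∀ r ∈ coxRels adj, FreeGroup.lift f r = 1 := by
  rintro r (⟨γ, rfl⟩ | ⟨γ, δ, hγδ, rfl⟩)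
  · simpa using hsq γ
  · simpa [← commutatorElement_def, commutatorElement_eq_one_iff_commute] using hcomm γ δ hγδ

theorem of_mul_self (γ : Γ) :
    (PresentedGroup.of γ : PresentedGroup (coxRels adj)) * PresentedGroup.of γ = 1 := by
  have := PresentedGroup.one_of_mem (rels := coxRels adj) (Or.inl ⟨γ, rfl⟩)
  rwa [map_mul] at this

theorem commute_of_of {γ δ : Γ} (h : RACommutes adj γ δ) :
    Commute (PresentedGroup.of γ : PresentedGroup (coxRels adj)) (PresentedGroup.of δ) := by
  have := PresentedGroup.one_of_mem (rels := coxRels adj) (Or.inr ⟨γ, δ, h, rfl⟩)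
  rwa [map_mul, map_mul, map_mul, map_inv, map_inv, ← commutatorElement_def,
    commutatorElement_eq_one_iff_commute] at this

open Classical in
noncomputable def retraction (adj : Γ → Γ → Prop) (t : Set Γ) :
    PresentedGroup (coxRels adj) →* PresentedGroup (coxRels adj) :=
  PresentedGroup.toGroup (f := fun γ => if γ ∈ t then PresentedGroup.of γ else 1) <|
    lift_eq_one_of_mem_coxRels
      (fun γ => by split_ifs <;> simp [of_mul_self])
      (fun γ δ h => by split_ifs <;> simp [commute_of_of h])

theorem retraction_of_mem {t : Set Γ} {γ : Γ} (h : γ ∈ t) :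
    retraction adj t (PresentedGroup.of γ) = PresentedGroup.of γ := by
  simp [retraction, PresentedGroup.toGroup.of, h]

theorem retraction_of_notMem {t : Set Γ} {γ : Γ} (h : γ ∉ t) :
    retraction adj t (PresentedGroup.of γ) = 1 := by
  simp [retraction, PresentedGroup.toGroup.of, h]

end RACoxeter

theorem closure_inter_eq_inf_general
    (adj : Γ → Γ → Prop) (s t : Set Γ) :
    Subgroup.closure
        ((fun γ => (PresentedGroup.of γ : PresentedGroup (coxRels adj))) '' (s ∩ t)) =
      Subgroup.closure
          ((fun γ => (PresentedGroup.of γ : PresentedGroup (coxRels adj))) '' s) ⊓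
        Subgroup.closure
          ((fun γ => (PresentedGroup.of γ : PresentedGroup (coxRels adj))) '' t) :=
  le_antisymm
    (le_inf (Subgroup.closure_mono (Set.image_mono Set.inter_subset_left))
      (Subgroup.closure_mono (Set.image_mono Set.inter_subset_right)))
    (Subgroup.closure_image_inf_le_of_retraction _ s t (RACoxeter.retraction adj t)
      (fun _ => RACoxeter.retraction_of_mem) (fun _ => RACoxeter.retraction_of_notMem))

/-- In a right-angled Coxeter group, the subgroup generated by `s ∩ t` is the
intersection of the subgroups generated by `s` and by `t`. -/
theorem closure_inter_eq_inf [Fintype Γ]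
    (adj : Γ → Γ → Prop) (hsym : Symmetric adj) (hirr : Irreflexive adj)
    (s t : Set Γ) :
    Subgroup.closure
        ((fun γ => (PresentedGroup.of γ : PresentedGroup (coxRels adj))) '' (s ∩ t)) =
      Subgroup.closure
          ((fun γ => (PresentedGroup.of γ : PresentedGroup (coxRels adj))) '' s) ⊓
        Subgroup.closure
          ((fun γ => (PresentedGroup.of γ : PresentedGroup (coxRels adj))) '' t) :=
  closure_inter_eq_inf_general adj s t
end

section
/- A word in the generators of a right-angled Coxeter group is reduced if and only if no permutation of it (by swapping adjacent commuting generators) contains a subword of the form γ·γ for some generator γ. -/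
variable {Γ : Type*}

/-- Auxiliary: the word contains the "bad pattern" witnessing non-reducedness. -/
def HasPattern (adj : Γ → Γ → Prop) (w : List Γ) : Prop :=
  ∃ (u v x : List Γ) (γ : Γ), w = u ++ γ :: (v ++ γ :: x) ∧
      ∀ δ ∈ v, RACommutes adj γ δ

lemma raCommutes_symm {adj : Γ → Γ → Prop} (hsym : Symmetric adj) {γ δ : Γ}
    (h : RACommutes adj γ δ) : RACommutes adj δ γ :=
  ⟨h.1.symm, fun ha => h.2 (hsym ha)⟩

lemma hasPattern_of_swapStep {adj : Γ → Γ → Prop} (hsym : Symmetric adj) {w w' : List Γ}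
    (hs : SwapStep adj w w') (hp : HasPattern adj w') : HasPattern adj w := by
  obtain ⟨a, b, γ₀, δ₀, hc, hw, hw'⟩ := hs
  obtain ⟨u, v, x, γ, he, hcom⟩ := hp
  rw [hw'] at he
  subst hw; clear hw'
  rcases List.append_eq_append_iff.mp he with ⟨e, hu, hb⟩ | ⟨e, ha, hb⟩
  · clear hu
    rcases e with _ | ⟨e0, _ | ⟨e1, e'⟩⟩
    · simp only [List.nil_append, List.cons.injEq] at hb
      obtain ⟨hd, hb⟩ := hb
      rcases v with _ | ⟨v0, vt⟩
      · simp only [List.nil_append, List.cons.injEq] at hb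
        obtain ⟨hg, hbx⟩ := hb
        exact ⟨a, [], b, γ, by simp [hd, hg], by simp⟩
      · simp only [List.cons_append, List.cons.injEq] at hb
        obtain ⟨hg, hb3⟩ := hb
        exact ⟨a ++ [γ₀], vt, x, γ, by simp [hd, hb3], fun d hdm => hcom d (by simp [hdm])⟩
    · simp only [List.cons_append, List.nil_append, List.cons.injEq] at hb
      obtain ⟨hd, hg, hb3⟩ := hb
      refine ⟨a, δ₀ :: v, x, γ, by simp [hg, hb3], ?_⟩
      intro d hdm
      rcases List.mem_cons.mp hdm with h | h
      · subst h; rw [hg] at hc; exact hc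
      · exact hcom d h
    · simp only [List.cons_append, List.cons.injEq] at hb
      obtain ⟨hd, hg, hb3⟩ := hb
      exact ⟨a ++ γ₀ :: δ₀ :: e', v, x, γ, by simp [hb3], hcom⟩
  · subst ha
    rcases e with _ | ⟨e0, e'⟩
    · simp only [List.nil_append, List.cons.injEq] at hb
      obtain ⟨hd, hb⟩ := hb
      rcases v with _ | ⟨v0, vt⟩
      · simp only [List.nil_append, List.cons.injEq] at hb
        obtain ⟨hg, hbx⟩ := hb
        have h2 : δ₀ = γ₀ := hd.symm.trans hg
        exact ⟨u, [], b, γ₀, by simp [h2], by simp⟩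
      · simp only [List.cons_append, List.cons.injEq] at hb
        obtain ⟨hg, hb3⟩ := hb
        refine ⟨u ++ [γ₀], vt, x, γ, ?_, fun d hdm => hcom d (by simp [hdm])⟩
        rw [← hb3, ← hd]; simp
    · simp only [List.cons_append, List.cons.injEq] at hb
      obtain ⟨h1, hb2⟩ := hb
      subst h1
      rcases List.append_eq_append_iff.mp hb2 with ⟨f, hf1, hf2⟩ | ⟨f, hf1, hf2⟩
      · rcases f with _ | ⟨f0, f'⟩
        · simp only [List.nil_append, List.cons.injEq] at hf2
          obtain ⟨hgd, hx⟩ := hf2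
          refine ⟨u, v ++ [γ₀], b, γ, by simp [hf1, hgd], ?_⟩
          intro d hdm
          rcases List.mem_append.mp hdm with h | h
          · exact hcom d h
          · simp only [List.mem_singleton] at h; subst h
            rw [← hgd] at hc
            exact raCommutes_symm hsym hc
        · simp only [List.cons_append, List.cons.injEq] at hf2
          obtain ⟨hgf, hx⟩ := hf2
          exact ⟨u, v, f' ++ γ₀ :: δ₀ :: b, γ, by simp [hf1, hgf], hcom⟩
      · rcases f with _ | ⟨f0, _ | ⟨f1, f''⟩⟩
        · simp only [List.nil_append, List.cons.injEq] at hf2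
          obtain ⟨hgd, hx⟩ := hf2
          refine ⟨u, v ++ [γ₀], b, γ, by simp [hf1, hgd], ?_⟩
          intro d hdm
          rcases List.mem_append.mp hdm with h | h
          · exact hcom d h
          · simp only [List.mem_singleton] at h; subst h
            rw [hgd] at hc
            exact raCommutes_symm hsym hc
        · simp only [List.cons_append, List.nil_append, List.cons.injEq] at hf2
          obtain ⟨hd, hg, hbx⟩ := hf2
          refine ⟨u, e', δ₀ :: b, γ, by simp [hg], ?_⟩
          intro d hdm
          exact hcom d (by simp [hf1, hdm])
        · simp only [List.cons_append, List.cons.injEq] at hf2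
          obtain ⟨hd, hg, hb3⟩ := hf2
          refine ⟨u, e' ++ γ₀ :: δ₀ :: f'', x, γ, by simp [hb3], ?_⟩
          intro d hdm
          subst hd; subst hg
          apply hcom
          rw [hf1]
          simp only [List.mem_append, List.mem_cons] at hdm ⊢
          tauto

lemma hasPattern_of_wordPerm {adj : Γ → Γ → Prop} (hsym : Symmetric adj) {w w' : List Γ}
    (hperm : WordPerm adj w w') : HasPattern adj w' → HasPattern adj w := by
  induction hperm with
  | refl => exact id
  | tail _ hstep ih => exact fun hp => ih (hasPattern_of_swapStep hsym hstep hp)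

lemma wordPerm_square_of_pattern {adj : Γ → Γ → Prop}
    (u v x : List Γ) (γ : Γ) (hcom : ∀ δ ∈ v, RACommutes adj γ δ) :
    ∃ (u' x' : List Γ), WordPerm adj (u ++ γ :: (v ++ γ :: x)) (u' ++ γ :: γ :: x') := by
  induction v generalizing u with
  | nil => exact ⟨u, x, Relation.ReflTransGen.refl⟩
  | cons d vt ih =>
    have hstep : SwapStep adj (u ++ γ :: (d :: vt ++ γ :: x))
        ((u ++ [d]) ++ γ :: (vt ++ γ :: x)) :=
      ⟨u, vt ++ γ :: x, γ, d, hcom d (by simp), by simp, by simp⟩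
    obtain ⟨u', x', hperm⟩ := ih (u ++ [d]) (fun e he => hcom e (by simp [he]))
    exact ⟨u', x', Relation.ReflTransGen.head hstep hperm⟩

/-- A word in the generators of a right-angled Coxeter group is reduced iff no
permutation of it contains a subword of the form `γ·γ`. -/
theorem reduced_iff_no_perm_square [Fintype Γ]
    (adj : Γ → Γ → Prop) (hsym : Symmetric adj) (hirr : Irreflexive adj)
    (w : List Γ) :
    GIsReduced adj w ↔
      ¬ ∃ (u x : List Γ) (γ : Γ), WordPerm adj w (u ++ γ :: γ :: x) := by
  constructor
  · rintro hred ⟨u, x, γ, hperm⟩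
    exact hred (hasPattern_of_wordPerm hsym hperm ⟨u, [], x, γ, by simp, by simp⟩)
  · rintro hnsq ⟨u, v, x, γ, hw, hcom⟩
    obtain ⟨u', x', hperm⟩ := wordPerm_square_of_pattern u v x γ hcom
    exact hnsq ⟨u', x', γ, hw ▸ hperm⟩
end

section
/- Let a be a final subword of the concatenation c·d (up to permutation by swaps of adjacent commuting letters) such that every end of a commutes with d. Then a commutes with d and a is a final subword of c. -/
variable {V : Type*} [DecidableEq V] [Fintype V]

/-- A letter is a nonempty connected subset of the graph `G`
(connectedness of the induced subgraph includes nonemptiness). -/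
def IsLetter (G : SimpleGraph V) (s : Finset V) : Prop :=
  (G.induce (↑s : Set V)).Connected

/-- The type of letters of `G`. -/
def Letter (G : SimpleGraph V) := {s : Finset V // IsLetter G s}

/-- A word is a finite sequence of letters. -/
abbrev Word (G : SimpleGraph V) := List (Letter G)

/-- Two letters commute iff their union is not a letter (is disconnected). -/
def LCommute (G : SimpleGraph V) (s t : Letter G) : Prop :=
  ¬ IsLetter G (s.1 ∪ t.1)

/-- Two words commute if their letters pairwise commute. -/
def WCommute (G : SimpleGraph V) (u v : Word G) : Prop :=
  ∀ s ∈ u, ∀ t ∈ v, LCommute G s t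

/-- One swap of two adjacent commuting letters. -/
def LSwapStep (G : SimpleGraph V) (w w' : Word G) : Prop :=
  ∃ (a b : Word G) (s t : Letter G), LCommute G s t ∧
    w = a ++ s :: t :: b ∧ w' = a ++ t :: s :: b

/-- Equivalence (`≈`) of words: sequences of swaps of adjacent commuting letters. -/
def WEquiv (G : SimpleGraph V) : Word G → Word G → Prop :=
  Relation.ReflTransGen (LSwapStep G)

/-- A word is reduced if there is no pair of comparable letters such that the
smaller one commutes with all letters strictly in between. -/
def WIsReduced (G : SimpleGraph V) (w : Word G) : Prop :=
  ¬ ∃ (a b c : Word G) (s t : Letter G),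
      w = a ++ s :: (b ++ t :: c) ∧
      ((s.1 ⊆ t.1 ∧ ∀ r ∈ b, LCommute G s r) ∨
       (t.1 ⊆ s.1 ∧ ∀ r ∈ b, LCommute G t r))

/-- A splitting of a letter `s`: a (possibly empty) word whose letters are
proper subsets of `s`. -/
def IsSplitting (G : SimpleGraph V) (x : Word G) (s : Letter G) : Prop :=
  ∀ t ∈ x, t.1 ⊂ s.1

/-- `SplitStep G u v`: `u` is obtained from `v` by replacing one occurrence of a
letter by a splitting of it. -/
def SplitStep (G : SimpleGraph V) (u v : Word G) : Prop :=
  ∃ (a b x : Word G) (s : Letter G),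
    v = a ++ s :: b ∧ IsSplitting G x s ∧ u = a ++ x ++ b

/-- One step of the splitting order up to equivalence. -/
def PrecStep (G : SimpleGraph V) (u v : Word G) : Prop :=
  ∃ u' v', WEquiv G v v' ∧ SplitStep G u' v' ∧ WEquiv G u u'

/-- The splitting order `≺` on words. -/
def WPrec (G : SimpleGraph V) : Word G → Word G → Prop :=
  Relation.TransGen (PrecStep G)

/-- `u ≼ v` : `u ≺ v` or `u ≈ v`. -/
def WPreceq (G : SimpleGraph V) (u v : Word G) : Prop :=
  WPrec G u v ∨ WEquiv G u v

/-- Absorption: if `s ⊆ t`, replace a subword `s·t` (or `t·s`) by `t`. -/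
def AbsorbStep (G : SimpleGraph V) (w w' : Word G) : Prop :=
  ∃ (a b : Word G) (s t : Letter G), s.1 ⊆ t.1 ∧
    (w = a ++ s :: t :: b ∨ w = a ++ t :: s :: b) ∧ w' = a ++ t :: b

/-- A non-splitting reduction step: Commutation or Absorption. -/
def NSStep (G : SimpleGraph V) (w w' : Word G) : Prop :=
  LSwapStep G w w' ∨ AbsorbStep G w w'

/-- `NSRed G u v`: `v` is a non-splitting reduction of `u`, i.e. a reduced word
obtained from `u` by Commutation and Absorption steps only. -/
def NSRed (G : SimpleGraph V) (u v : Word G) : Prop :=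
  Relation.ReflTransGen (NSStep G) u v ∧ WIsReduced G v

/-- The letter `t` is left-absorbed by the word `w`: `t` is contained in some
letter of `w` and commutes with all earlier letters. -/
def LetterLeftAbsorbed (G : SimpleGraph V) (t : Letter G) (w : Word G) : Prop :=
  ∃ (a b : Word G) (s : Letter G), w = a ++ s :: b ∧ t.1 ⊆ s.1 ∧ ∀ r ∈ a, LCommute G t r

/-- The letter `t` is right-absorbed by the word `w`. -/
def LetterRightAbsorbed (G : SimpleGraph V) (t : Letter G) (w : Word G) : Prop :=
  ∃ (a b : Word G) (s : Letter G), w = a ++ s :: b ∧ t.1 ⊆ s.1 ∧ ∀ r ∈ b, LCommute G t r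

/-- The letter `t` is properly left-absorbed by the word `w`. -/
def LetterProperLeftAbsorbed (G : SimpleGraph V) (t : Letter G) (w : Word G) : Prop :=
  ∃ (a b : Word G) (s : Letter G), w = a ++ s :: b ∧ t.1 ⊂ s.1 ∧ ∀ r ∈ a, LCommute G t r

/-- The letter `t` is properly right-absorbed by the word `w`. -/
def LetterProperRightAbsorbed (G : SimpleGraph V) (t : Letter G) (w : Word G) : Prop :=
  ∃ (a b : Word G) (s : Letter G), w = a ++ s :: b ∧ t.1 ⊂ s.1 ∧ ∀ r ∈ b, LCommute G t r

/-- A word `u` is left-absorbed by `w` if each of its letters is. -/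
def LeftAbsorbed (G : SimpleGraph V) (u w : Word G) : Prop :=
  ∀ t ∈ u, LetterLeftAbsorbed G t w

/-- A word `u` is right-absorbed by `w` if each of its letters is. -/
def RightAbsorbed (G : SimpleGraph V) (u w : Word G) : Prop :=
  ∀ t ∈ u, LetterRightAbsorbed G t w

/-- A word `u` is properly left-absorbed by `w` if each of its letters is. -/
def ProperLeftAbsorbed (G : SimpleGraph V) (u w : Word G) : Prop :=
  ∀ t ∈ u, LetterProperLeftAbsorbed G t w

/-- A word `u` is properly right-absorbed by `w` if each of its letters is. -/
def ProperRightAbsorbed (G : SimpleGraph V) (u w : Word G) : Prop :=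
  ∀ t ∈ u, LetterProperRightAbsorbed G t w

/-- A commuting word: its letters pairwise commute. -/
def IsCommuting (G : SimpleGraph V) (u : Word G) : Prop :=
  List.Pairwise (LCommute G) u

/-- The letter `s` is an end of the word `u` if `u ≈ v·s` for some `v`. -/
def IsEnd (G : SimpleGraph V) (s : Letter G) (u : Word G) : Prop :=
  ∃ v, WEquiv G u (v ++ [s])

/-- `t` is the final segment of `u`: the commuting word consisting of all ends of `u`. -/
def IsFinalSegment (G : SimpleGraph V) (t u : Word G) : Prop :=
  IsCommuting G t ∧ ∀ s, s ∈ t ↔ IsEnd G s u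

/-! Write `d = d'·r`; then `r` is an end of `w·a`. It is not an end of `a`, since it would then
commute with itself; so it is an end of `w` that commutes with all of `a`. Moving it to the far
right and cancelling it turns `c·d'·r ≈ w·a` into `c·d' ≈ w'·a`, and we induct on `d`.

Everything rests on tracking one occurrence of a letter through a chain of swaps: in any word
equivalent to `u·r·v`, where `r` commutes with `v`, that occurrence of `r` still commutes with all
later letters, and deleting it leaves a word equivalent to `u·v`. -/

theorem List.append_cons_eq_append_cons_cons_cases {β : Type*} {w₁ w₂ A B : List β}
    {r s t : β} (h : w₁ ++ r :: w₂ = A ++ s :: t :: B) :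
    (∃ C, w₁ = A ++ s :: t :: C ∧ B = C ++ r :: w₂) ∨
    (w₁ = A ∧ r = s ∧ w₂ = t :: B) ∨
    (w₁ = A ++ [s] ∧ r = t ∧ w₂ = B) ∨
    (∃ C, A = w₁ ++ r :: C ∧ w₂ = C ++ s :: t :: B) := by
  induction w₁ generalizing A with
  | nil => rcases A with _ | ⟨x, A⟩ <;> simp_all
  | cons x w₁ ih =>
    rcases A with _ | ⟨y, A⟩
    · rcases w₁ with _ | ⟨z, w₁⟩ <;> simp_all
    · simp only [List.cons_append, List.cons.injEq] at h
      obtain ⟨rfl, h⟩ := h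
      rcases ih h with ⟨C, rfl, rfl⟩ | ⟨rfl, rfl, rfl⟩ | ⟨rfl, rfl, rfl⟩ | ⟨C, rfl, rfl⟩ <;> simp

section Words

variable {α : Type*} [DecidableEq α] {G : SimpleGraph α}

theorem LCommute.symm {s t : Letter G} (h : LCommute G s t) : LCommute G t s := by
  rwa [LCommute, Finset.union_comm]

theorem not_lcommute_self (s : Letter G) : ¬ LCommute G s s := by
  simpa [LCommute] using s.2

theorem LSwapStep.symm {w w' : Word G} (h : LSwapStep G w w') : LSwapStep G w' w := by
  obtain ⟨a, b, s, t, hst, rfl, rfl⟩ := h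
  exact ⟨a, b, t, s, hst.symm, rfl, rfl⟩

theorem LSwapStep.append_left {w w' : Word G} (x : Word G) (h : LSwapStep G w w') :
    LSwapStep G (x ++ w) (x ++ w') := by
  obtain ⟨a, b, s, t, hst, rfl, rfl⟩ := h
  exact ⟨x ++ a, b, s, t, hst, by simp, by simp⟩

theorem LSwapStep.append_right {w w' : Word G} (x : Word G) (h : LSwapStep G w w') :
    LSwapStep G (w ++ x) (w' ++ x) := by
  obtain ⟨a, b, s, t, hst, rfl, rfl⟩ := h
  exact ⟨a, b ++ x, s, t, hst, by simp, by simp⟩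

theorem WEquiv.refl (w : Word G) : WEquiv G w w := Relation.ReflTransGen.refl

theorem WEquiv.trans {u v w : Word G} (huv : WEquiv G u v) (hvw : WEquiv G v w) :
    WEquiv G u w :=
  Relation.ReflTransGen.trans huv hvw

theorem WEquiv.symm {u v : Word G} (h : WEquiv G u v) : WEquiv G v u := by
  induction h with
  | refl => exact .refl _
  | tail _ hstep ih => exact Relation.ReflTransGen.head hstep.symm ih

theorem WEquiv.append_right {u v : Word G} (x : Word G) (h : WEquiv G u v) :
    WEquiv G (u ++ x) (v ++ x) :=
  Relation.ReflTransGen.lift (· ++ x) (fun _ _ => LSwapStep.append_right x) _ _ h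

theorem wequiv_append_cons_of_lcommute (r : Letter G) (w₁ w₂ : Word G)
    (hr : ∀ t ∈ w₂, LCommute G r t) : WEquiv G (w₁ ++ r :: w₂) (w₁ ++ w₂ ++ [r]) := by
  induction w₂ generalizing w₁ with
  | nil => simpa using WEquiv.refl _
  | cons t w₂ ih =>
    have hswap : LSwapStep G (w₁ ++ r :: t :: w₂) (w₁ ++ t :: r :: w₂) :=
      ⟨w₁, w₂, r, t, hr t (by simp), rfl, rfl⟩
    have hmove := ih (w₁ ++ [t]) fun x hx => hr x (List.mem_cons_of_mem t hx)
    simp only [List.append_assoc, List.cons_append, List.nil_append] at hmove ⊢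
    exact Relation.ReflTransGen.head hswap hmove

theorem LSwapStep.exists_of_eq_append_cons {w v w₁ w₂ : Word G} {r : Letter G}
    (hwv : LSwapStep G w v) (hw : w = w₁ ++ r :: w₂) (hr : ∀ t ∈ w₂, LCommute G r t) :
    ∃ v₁ v₂, v = v₁ ++ r :: v₂ ∧ (∀ t ∈ v₂, LCommute G r t) ∧
      WEquiv G (w₁ ++ w₂) (v₁ ++ v₂) := by
  obtain ⟨A, B, s, t, hst, rfl, rfl⟩ := hwv
  rcases List.append_cons_eq_append_cons_cons_cases hw.symm with
    ⟨C, rfl, rfl⟩ | ⟨rfl, rfl, rfl⟩ | ⟨rfl, rfl, rfl⟩ | ⟨C, rfl, rfl⟩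
  · refine ⟨A ++ t :: s :: C, w₂, by simp, hr, .single ?_⟩
    exact ⟨A, C ++ w₂, s, t, hst, by simp, by simp⟩
  · exact ⟨w₁ ++ [t], B, by simp, fun x hx => hr x (List.mem_cons_of_mem t hx),
      by simpa using WEquiv.refl _⟩
  · exact ⟨A, s :: w₂, rfl, List.forall_mem_cons.2 ⟨hst.symm, hr⟩, by simpa using WEquiv.refl _⟩
  · refine ⟨w₁, C ++ t :: s :: B, by simp, ?_, .single ?_⟩
    · intro x hx
      apply hr
      simp only [List.mem_append, List.mem_cons] at hx ⊢
      tauto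
    · exact LSwapStep.append_left w₁ ⟨C, B, s, t, hst, rfl, rfl⟩

theorem WEquiv.exists_of_append_cons {w₁ w₂ v : Word G} {r : Letter G}
    (h : WEquiv G (w₁ ++ r :: w₂) v) (hr : ∀ t ∈ w₂, LCommute G r t) :
    ∃ v₁ v₂, v = v₁ ++ r :: v₂ ∧ (∀ t ∈ v₂, LCommute G r t) ∧
      WEquiv G (w₁ ++ w₂) (v₁ ++ v₂) := by
  induction h with
  | refl => exact ⟨w₁, w₂, rfl, hr, .refl _⟩
  | tail _ hstep ih =>
    obtain ⟨u₁, u₂, rfl, hu, hequiv⟩ := ih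
    obtain ⟨v₁, v₂, rfl, hv, hequiv'⟩ := hstep.exists_of_eq_append_cons rfl hu
    exact ⟨v₁, v₂, rfl, hv, hequiv.trans hequiv'⟩

theorem isEnd_iff {r : Letter G} {u : Word G} :
    IsEnd G r u ↔ ∃ w₁ w₂, u = w₁ ++ r :: w₂ ∧ ∀ t ∈ w₂, LCommute G r t := by
  constructor
  · rintro ⟨v, hv⟩
    obtain ⟨w₁, w₂, hu, hr, -⟩ := hv.symm.exists_of_append_cons (w₂ := []) (by simp)
    exact ⟨w₁, w₂, hu, hr⟩
  · rintro ⟨w₁, w₂, rfl, hr⟩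
    exact ⟨w₁ ++ w₂, wequiv_append_cons_of_lcommute r w₁ w₂ hr⟩

theorem WEquiv.cancel_right {u v : Word G} {r : Letter G}
    (h : WEquiv G (u ++ [r]) (v ++ [r])) : WEquiv G u v := by
  obtain ⟨v₁, v₂, hv, hr, hequiv⟩ := h.exists_of_append_cons (w₂ := []) (by simp)
  rcases List.eq_nil_or_concat v₂ with rfl | ⟨v₂, x, rfl⟩
  · simpa [List.append_cancel_right hv] using hequiv
  · -- the last letter of `v₂` would be `r`, which does not commute with itself
    have hv' : v ++ [r] = (v₁ ++ r :: v₂) ++ [x] := by simpa using hv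
    have hx : r = x := by simpa using (List.append_inj' hv' rfl).2
    exact absurd (hr x (by simp)) (hx ▸ not_lcommute_self r)

theorem IsEnd.of_append {r : Letter G} {u v : Word G} (h : IsEnd G r (u ++ v)) :
    IsEnd G r v ∨ IsEnd G r u ∧ ∀ t ∈ v, LCommute G r t := by
  obtain ⟨w₁, w₂, huv, hr⟩ := isEnd_iff.1 h
  rcases List.append_eq_append_iff.1 huv with ⟨C, rfl, hv⟩ | ⟨C, rfl, hC⟩
  · exact .inl (isEnd_iff.2 ⟨C, w₂, hv, hr⟩)
  · rcases List.cons_eq_append_iff.1 hC with ⟨rfl, rfl⟩ | ⟨C, rfl, rfl⟩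
    · exact .inl (isEnd_iff.2 ⟨[], w₂, rfl, hr⟩)
    · exact .inr ⟨isEnd_iff.2 ⟨w₁, C, rfl, fun t ht => hr t (by simp [ht])⟩,
        fun t ht => hr t (by simp [ht])⟩

theorem final_subword_of_append_singleton {x w a : Word G} {r : Letter G}
    (h : WEquiv G (x ++ [r]) (w ++ a)) (hr : ¬ IsEnd G r a) :
    (∀ s ∈ a, LCommute G r s) ∧ ∃ w', WEquiv G x (w' ++ a) := by
  have hend : IsEnd G r (w ++ a) := ⟨x, h.symm⟩
  obtain ⟨⟨w', hw'⟩, hra⟩ := hend.of_append.resolve_left hr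
  have hmove : WEquiv G (w' ++ [r] ++ a) (w' ++ a ++ [r]) := by
    simpa using wequiv_append_cons_of_lcommute r w' a hra
  exact ⟨hra, w', (h.trans ((hw'.append_right a).trans hmove)).cancel_right⟩

end Words

/-- If `a` is a final subword of `c·d` and every end of `a` commutes with `d`,
then `a` commutes with `d` and `a` is a final subword of `c`. -/
theorem final_subword_of_append (G : SimpleGraph V) (a c d : Word G)
    (hfin : ∃ w, WEquiv G (c ++ d) (w ++ a))
    (hends : ∀ s : Letter G, IsEnd G s a → ∀ t ∈ d, LCommute G s t) :
    WCommute G a d ∧ ∃ w, WEquiv G c (w ++ a) := by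
  induction d using List.reverseRecOn with
  | nil => simpa [WCommute] using hfin
  | append_singleton d r ih =>
    obtain ⟨w, hw⟩ := hfin
    obtain ⟨hra, hc⟩ := final_subword_of_append_singleton (x := c ++ d) (by simpa using hw)
      fun hr => not_lcommute_self r (hends r hr r (by simp))
    obtain ⟨had, hcw⟩ := ih hc fun s hs t ht => hends s hs t (by simp [ht])
    refine ⟨fun s hs t ht => ?_, hcw⟩
    rcases List.mem_append.1 ht with ht | ht
    · exact had s hs t ht
    · exact (List.mem_singleton.1 ht) ▸ (hra s hs).symm
end

section
/- In a building for a right-angled Coxeter group, a reduced path of type w connecting chambers x and y is uniquely determined by w, x, and y. -/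
variable {Γ : Type*} {X : Type*}

/-- `IsPath rel w x y`: there is a path of type `w` from `x` to `y` in the
chamber system, i.e. consecutive chambers are distinct and `∼_γᵢ`-related. -/
def IsPath (rel : Γ → X → X → Prop) : List Γ → X → X → Prop
  | [], x, y => x = y
  | γ :: w, x, y => ∃ z, x ≠ z ∧ rel γ x z ∧ IsPath rel w z y

/-- `IsPathSeq rel w p`: the sequence of chambers `p` is a path of type `w`. -/
def IsPathSeq (rel : Γ → X → X → Prop) : List Γ → List X → Prop
  | [], p => ∃ x, p = [x]
  | γ :: w, p => ∃ x y q, p = x :: y :: q ∧ x ≠ y ∧ rel γ x y ∧ IsPathSeq rel w (y :: q)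

/-- A chamber system is a building if every `∼_γ`-class has at least two
elements and, for all chambers `x, y`, there is a group element `g` such that a
reduced path of type `w` from `x` to `y` exists iff `w` represents `g`. -/
def IsBuilding (adj : Γ → Γ → Prop) (rel : Γ → X → X → Prop) : Prop :=
  (∀ (γ : Γ) (x : X), ∃ y, y ≠ x ∧ rel γ x y) ∧
  ∀ x y : X, ∃ g : PresentedGroup (coxRels adj), ∀ w : List Γ,
    GIsReduced adj w → (IsPath rel w x y ↔ evalWord adj w = g)


noncomputable def coxParity (adj : Γ → Γ → Prop) :
    PresentedGroup (coxRels adj) →* Multiplicative (ZMod 2) :=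
  PresentedGroup.toGroup (f := fun _ => Multiplicative.ofAdd (1 : ZMod 2)) (by
    rintro r (⟨γ, rfl⟩ | ⟨γ, δ, _, rfl⟩) <;> simp <;> decide)

theorem cox_of_ne_one (adj : Γ → Γ → Prop) (γ : Γ) :
    (PresentedGroup.of γ : PresentedGroup (coxRels adj)) ≠ 1 := by
  intro h
  have := congrArg (coxParity adj) h
  simp [coxParity, PresentedGroup.toGroup.of] at this

theorem gIsReduced_tail {adj : Γ → Γ → Prop} {γ : Γ} {w : List Γ}
    (h : GIsReduced adj (γ :: w)) : GIsReduced adj w := by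
  rintro ⟨u, v, z, δ, hEq, hcomm⟩
  exact h ⟨γ :: u, v, z, δ, by rw [hEq]; rfl, hcomm⟩

theorem isPath_of_seq {rel : Γ → X → X → Prop} :
    ∀ (w : List Γ) (p : List X) (a b : X), IsPathSeq rel w p →
      p.head? = some a → p.getLast? = some b → IsPath rel w a b := by
  intro w
  induction w with
  | nil =>
    rintro p a b ⟨z, rfl⟩ ha hb
    simp at ha hb
    subst ha; subst hb
    simp [IsPath]
  | cons γ w ih =>
    rintro p a b ⟨c, d, t, rfl, hne, hr, hseq⟩ ha hb
    simp at ha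
    subst ha
    refine ⟨d, hne, hr, ih (d :: t) d b hseq rfl ?_⟩
    rw [← hb, List.getLast?_cons_cons]

/-- In a building for a right-angled Coxeter group, a reduced path of type `w`
from `x` to `y` is uniquely determined by `w`, `x` and `y`. -/
theorem reduced_path_unique [Fintype Γ]
    (adj : Γ → Γ → Prop) (hsym : Symmetric adj) (hirr : Irreflexive adj)
    (rel : Γ → X → X → Prop) (heq : ∀ γ, Equivalence (rel γ))
    (hbld : IsBuilding adj rel)
    (w : List Γ) (hw : GIsReduced adj w) (x y : X) (p q : List X)
    (hp : IsPathSeq rel w p) (hq : IsPathSeq rel w q)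
    (hpx : p.head? = some x) (hpy : p.getLast? = some y)
    (hqx : q.head? = some x) (hqy : q.getLast? = some y) :
    p = q := by
  induction w generalizing x p q with
  | nil =>
    obtain ⟨a, rfl⟩ := hp
    obtain ⟨c, rfl⟩ := hq
    simp_all
  | cons γ w ih =>
    obtain ⟨a, b, t, rfl, hab, hrab, hseqp⟩ := hp
    obtain ⟨c, d, s, rfl, hcd, hrcd, hseqq⟩ := hq
    simp only [List.head?_cons, Option.some.injEq] at hpx hqx
    subst hpx; subst hqx
    rw [List.getLast?_cons_cons] at hpy hqy
    have hw' : GIsReduced adj w := gIsReduced_tail hw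
    have hbd : b = d := by
      by_contra hne
      have hpathb : IsPath rel w b y := isPath_of_seq w (b :: t) b y hseqp rfl hpy
      have hpathd : IsPath rel w d y := isPath_of_seq w (d :: s) d y hseqq rfl hqy
      have hrdb : rel γ d b := (heq γ).trans ((heq γ).symm hrcd) hrab
      have hpathd' : IsPath rel (γ :: w) d y := ⟨b, Ne.symm hne, hrdb, hpathb⟩
      obtain ⟨g, hg⟩ := hbld.2 d y
      have h1 : evalWord adj w = g := (hg w hw').mp hpathd
      have h2 : evalWord adj (γ :: w) = g := (hg (γ :: w) hw).mp hpathd'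
      have key : evalWord adj (γ :: w) =
          (PresentedGroup.of γ : PresentedGroup (coxRels adj)) * evalWord adj w := by
        simp [evalWord]
      have hmul : (PresentedGroup.of γ : PresentedGroup (coxRels adj)) * g = g := by
        calc (PresentedGroup.of γ : PresentedGroup (coxRels adj)) * g
            = PresentedGroup.of γ * evalWord adj w := by rw [h1]
          _ = evalWord adj (γ :: w) := key.symm
          _ = g := h2
      exact cox_of_ne_one adj γ (mul_right_cancel (b := g)
        (show PresentedGroup.of γ * g = 1 * g by rw [one_mul]; exact hmul))
    subst hbd
    have := ih hw' b (b :: t) (b :: s) hseqp hseqq rfl hpy rfl hqy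
    rw [this]
end
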